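/- arXiv:2307.12958 — 3 statements merged into one kernel-verified Lean document; each statement's English description precedes it below -/
import Mathlib

section
/- Let X be a real Banach space with a spreading Schauder basis. Then for every α ∈ (0,1) and every λ > 0 there exists a fixed-point-free α-Hölder λ-Lipschitz map T : B_X → B_X with d(T,B_X) = 0. -/
/-!
Because the basis is spreading, the right shift `S : ∑ aₙ xₙ ↦ ∑ aₙ xₙ₊₁` is bounded and the basis
is semi-normalized. With `r` the radial retraction onto the unit ball, consider the Lipschitz
self-map `F u = r ((1 - ‖u‖) x₀ + S u)` of `B_X`.

A fixed point satisfies `m u = (1 - ‖u‖) x₀ + S u` with `m = max 1 ‖(1 - ‖u‖) x₀ + S u‖`, so its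
coefficients satisfy `m a₀ = 1 - ‖u‖` and `m aₙ₊₁ = aₙ`. If `m = 1` they are constant, hence zero
because `‖xₙ‖` is bounded below; if `m > 1` then `‖u‖ = 1` and `a₀ = 0`. Either way `u = 0`,
contradicting `m a₀ = 1`. On the other hand, on the ray through `∑ s⁻ⁿ xₙ` (for `s > 1`) one finds
`w` with `F w = r (s w)`, whose displacement is at most `s - 1`.

Finally, conjugating `F` by a dilation with a small factor `s` keeps it Lipschitz while shrinking
its range to radius `s`, and such a map is `α`-Hölder with constant `λ`.
-/

open Metric Set Filter Topology
open scoped NNReal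
open SummationFilter

section RadialRetraction

variable {E : Type*} [NormedAddCommGroup E] [NormedSpace ℝ E]

noncomputable def radialRetraction (v : E) : E := (max 1 ‖v‖)⁻¹ • v

lemma norm_radialRetraction_le_one (v : E) : ‖radialRetraction v‖ ≤ 1 := by
  have h := lt_of_lt_of_le one_pos (le_max_left 1 ‖v‖)
  rw [radialRetraction, norm_smul, norm_inv, Real.norm_of_nonneg h.le, inv_mul_le_one₀ h]
  exact le_max_right _ _

lemma radialRetraction_of_norm_le_one {v : E} (hv : ‖v‖ ≤ 1) : radialRetraction v = v := by
  rw [radialRetraction, max_eq_left hv, inv_one, one_smul]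

lemma norm_radialRetraction_of_one_lt {v : E} (hv : 1 < ‖v‖) : ‖radialRetraction v‖ = 1 := by
  rw [radialRetraction, max_eq_right hv.le, norm_smul, norm_inv, norm_norm,
    inv_mul_cancel₀ (by positivity)]

lemma lipschitzWith_radialRetraction : LipschitzWith 2 (radialRetraction : E → E) := by
  refine LipschitzWith.of_dist_le_mul fun v w ↦ ?_
  simp only [dist_eq_norm, NNReal.coe_ofNat]
  wlog h : ‖w‖ ≤ ‖v‖ generalizing v w
  · rw [norm_sub_rev, norm_sub_rev v]
    exact this w v (le_of_not_ge h)
  set a := max 1 ‖v‖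
  set b := max 1 ‖w‖
  have hb1 : 1 ≤ b := le_max_left _ _
  have hba : b ≤ a := max_le_max le_rfl h
  have hab : a - b ≤ ‖v - w‖ := by
    have := abs_max_sub_max_le_abs ‖v‖ ‖w‖ 1
    rw [max_comm ‖v‖, max_comm ‖w‖] at this
    linarith [le_abs_self (a - b), abs_norm_sub_norm_le v w]
  have hb0 : 0 < b := by linarith
  have ha0 : 0 < a := by linarith
  have hinv : 0 ≤ b⁻¹ - a⁻¹ := sub_nonneg.mpr (inv_anti₀ hb0 hba)
  have hwb : (b⁻¹ - a⁻¹) * ‖w‖ ≤ a - b := calc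
    (b⁻¹ - a⁻¹) * ‖w‖ ≤ (b⁻¹ - a⁻¹) * b := mul_le_mul_of_nonneg_left (le_max_right _ _) hinv
    _ = (a - b) / a := by field_simp
    _ ≤ a - b := div_le_self (by linarith) (by linarith)
  calc ‖radialRetraction v - radialRetraction w‖
      = ‖a⁻¹ • (v - w) + (b⁻¹ - a⁻¹) • (-w)‖ := by
        rw [radialRetraction, radialRetraction]; congr 1; module
    _ ≤ a⁻¹ * ‖v - w‖ + (b⁻¹ - a⁻¹) * ‖w‖ := by
        rw [← norm_neg w, ← norm_smul_of_nonneg (by positivity),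
          ← norm_smul_of_nonneg hinv]
        exact norm_add_le _ _
    _ ≤ 2 * ‖v - w‖ := by
        have : a⁻¹ ≤ 1 := inv_le_one_of_one_le₀ (hb1.trans hba)
        nlinarith [norm_nonneg (v - w)]

lemma norm_radialRetraction_smul_sub_le {w : E} (hw : ‖w‖ ≤ 1) {s : ℝ} (hs : 1 ≤ s) :
    ‖radialRetraction (s • w) - w‖ ≤ s - 1 := by
  have hmax : 1 ≤ max 1 ‖s • w‖ := le_max_left _ _
  have hm1 : 1 ≤ (max 1 ‖s • w‖)⁻¹ * s := by
    rw [one_le_inv_mul₀ (by positivity), max_le_iff, norm_smul, Real.norm_of_nonneg (by linarith)]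
    exact ⟨hs, mul_le_of_le_one_right (by linarith) hw⟩
  have hms : (max 1 ‖s • w‖)⁻¹ * s ≤ s := inv_mul_le_of_le_mul₀ (by positivity) (by linarith)
    (by nlinarith)
  calc ‖radialRetraction (s • w) - w‖ = ((max 1 ‖s • w‖)⁻¹ * s - 1) * ‖w‖ := by
        rw [radialRetraction, smul_smul, ← norm_smul_of_nonneg (by linarith), sub_smul, one_smul]
    _ ≤ s - 1 := by nlinarith [norm_nonneg w]

end RadialRetraction

section ConditionalSums

lemma hasSum_conditional_iff_tendsto {M : Type*} [AddCommMonoid M] [TopologicalSpace M]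
    {f : ℕ → M} {a : M} :
    HasSum f a (conditional ℕ) ↔ Tendsto (fun N ↦ ∑ i ∈ Finset.range N, f i) atTop (𝓝 a) := by
  rw [HasSum, conditional_filter_eq_map_range, tendsto_map'_iff]
  rfl

lemma HasSum.conditional_zero_add {M : Type*} [AddCommMonoid M] [TopologicalSpace M]
    [ContinuousAdd M] {f : ℕ → M} {a : M} (h : HasSum (fun n ↦ f (n + 1)) a (conditional ℕ)) :
    HasSum f (f 0 + a) (conditional ℕ) := by
  rw [hasSum_conditional_iff_tendsto, ← tendsto_add_atTop_iff_nat 1]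
  simpa only [Finset.sum_range_succ', add_comm] using
    (hasSum_conditional_iff_tendsto.1 h).const_add (f 0)

lemma HasSum.conditional_tendsto_zero {G : Type*} [AddCommGroup G] [TopologicalSpace G]
    [IsTopologicalAddGroup G] {f : ℕ → G} {a : G} (h : HasSum f a (conditional ℕ)) :
    Tendsto f atTop (𝓝 0) := by
  rw [hasSum_conditional_iff_tendsto] at h
  simpa [Finset.sum_range_succ] using ((tendsto_add_atTop_iff_nat 1).2 h).sub h

variable {E F : Type*} [SeminormedAddCommGroup E] [SeminormedAddCommGroup F]

lemma norm_le_of_hasSum_conditional {f : ℕ → E} {g : ℕ → F} {a : E} {b : F} {B : ℝ}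
    (hfg : ∀ N, ‖∑ i ∈ Finset.range N, g i‖ ≤ B * ‖∑ i ∈ Finset.range N, f i‖)
    (hf : HasSum f a (conditional ℕ)) (hg : HasSum g b (conditional ℕ)) : ‖b‖ ≤ B * ‖a‖ := by
  rw [hasSum_conditional_iff_tendsto] at hf hg
  exact le_of_tendsto_of_tendsto' hg.norm (hf.norm.const_mul B) hfg

lemma Summable.conditional_of_norm_sum_le [CompleteSpace F] {f : ℕ → E} {g : ℕ → F} {B : ℝ}
    (hB : 0 ≤ B) (hfg : ∀ s : Finset ℕ, ‖∑ i ∈ s, g i‖ ≤ B * ‖∑ i ∈ s, f i‖)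
    (hf : Summable f (conditional ℕ)) : Summable g (conditional ℕ) := by
  have hdist : ∀ m n, dist (∑ i ∈ Finset.range m, g i) (∑ i ∈ Finset.range n, g i)
      ≤ B * dist (∑ i ∈ Finset.range m, f i) (∑ i ∈ Finset.range n, f i) := by
    intro m n
    wlog hmn : m ≤ n generalizing m n
    · rw [dist_comm, dist_comm (∑ i ∈ _, f i)]
      exact this n m (le_of_not_ge hmn)
    rw [dist_comm, dist_comm (∑ i ∈ _, f i), dist_eq_norm, dist_eq_norm,
      ← Finset.sum_Ico_eq_sub _ hmn, ← Finset.sum_Ico_eq_sub _ hmn]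
    exact hfg _
  obtain ⟨a, ha⟩ := hf
  obtain ⟨b, hb0, hb, hlim⟩ :=
    cauchySeq_iff_le_tendsto_0.1 (hasSum_conditional_iff_tendsto.1 ha).cauchySeq
  have hcauchy : CauchySeq fun N ↦ ∑ i ∈ Finset.range N, g i :=
    cauchySeq_iff_le_tendsto_0.2 ⟨fun N ↦ B * b N, fun N ↦ mul_nonneg hB (hb0 N),
      fun m n N hm hn ↦ (hdist m n).trans (mul_le_mul_of_nonneg_left (hb m n N hm hn) hB),
      by simpa using hlim.const_mul B⟩
  obtain ⟨c, hc⟩ := cauchySeq_tendsto_of_complete hcauchy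
  exact ⟨c, hasSum_conditional_iff_tendsto.2 hc⟩

end ConditionalSums

lemma bddAbove_range_of_forall_strictMono {r : ℕ → ℝ} (hr : ∀ n, 0 < r n)
    (h : ∀ φ : ℕ → ℕ, StrictMono φ → ∃ B, ∀ n, r (φ n) ≤ B * r n) : BddAbove (range r) := by
  by_contra hunb
  have hfreq : ∀ k : ℕ, ∃ᶠ n in atTop, (k + 1) * r k < r n := fun k ↦ by
    by_contra hev
    simp only [not_frequently, not_lt] at hev
    exact hunb (isBoundedUnder_of_eventually_le hev).bddAbove_range
  obtain ⟨φ, hφ, hgrow⟩ := extraction_forall_of_frequently hfreq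
  obtain ⟨B, hB⟩ := h φ hφ
  obtain ⟨k, hk⟩ := exists_nat_gt B
  have : (k + 1) * r k < B * r k := (hgrow k).trans_le (hB k)
  have := lt_of_mul_lt_mul_right this (hr k).le
  linarith

section Spreading

variable {X : Type*} [NormedAddCommGroup X] [NormedSpace ℝ X] {x : ℕ → X}

def IsSpreading (x : ℕ → X) : Prop :=
  ∀ φ : ℕ → ℕ, StrictMono φ → ∃ A B : ℝ, 0 < A ∧ 0 < B ∧
    ∀ (s : Finset ℕ) (a : ℕ → ℝ),
      A * ‖∑ n ∈ s, a n • x n‖ ≤ ‖∑ n ∈ s, a n • x (φ n)‖ ∧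
      ‖∑ n ∈ s, a n • x (φ n)‖ ≤ B * ‖∑ n ∈ s, a n • x n‖

namespace IsSpreading

lemma exists_mul_norm_le (hx : IsSpreading x) {φ : ℕ → ℕ} (hφ : StrictMono φ) :
    ∃ A B : ℝ, 0 < A ∧ 0 < B ∧ ∀ n, A * ‖x n‖ ≤ ‖x (φ n)‖ ∧ ‖x (φ n)‖ ≤ B * ‖x n‖ := by
  obtain ⟨A, B, hA, hB, h⟩ := hx φ hφ
  exact ⟨A, B, hA, hB, fun n ↦ by simpa using h {n} 1⟩

lemma bddAbove_range_norm (hx : IsSpreading x) (hx0 : ∀ n, x n ≠ 0) :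
    BddAbove (range fun n ↦ ‖x n‖) :=
  bddAbove_range_of_forall_strictMono (fun n ↦ norm_pos_iff.2 (hx0 n)) fun _ hφ ↦
    let ⟨_, B, _, _, h⟩ := hx.exists_mul_norm_le hφ
    ⟨B, fun n ↦ (h n).2⟩

lemma exists_pos_le_norm (hx : IsSpreading x) (hx0 : ∀ n, x n ≠ 0) : ∃ c > 0, ∀ n, c ≤ ‖x n‖ := by
  have hpos n : 0 < ‖x n‖ := norm_pos_iff.2 (hx0 n)
  obtain ⟨M, hM⟩ : BddAbove (range fun n ↦ ‖x n‖⁻¹) := by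
    refine bddAbove_range_of_forall_strictMono (fun n ↦ inv_pos.2 (hpos n)) fun _ hφ ↦ ?_
    obtain ⟨A, _, hA, _, h⟩ := hx.exists_mul_norm_le hφ
    refine ⟨A⁻¹, fun n ↦ ?_⟩
    rw [← mul_inv]
    exact inv_anti₀ (mul_pos hA (hpos n)) (h n).1
  have hM0 : 0 < M := (inv_pos.2 (hpos 0)).trans_le (hM ⟨0, rfl⟩)
  exact ⟨M⁻¹, inv_pos.2 hM0, fun n ↦ inv_le_of_inv_le₀ (hpos n) (hM ⟨n, rfl⟩)⟩

end IsSpreading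

end Spreading

section SchauderBasis

variable {X : Type*} [NormedAddCommGroup X] [NormedSpace ℝ X] {x : ℕ → X}

lemma tendsto_zero_of_hasSum_conditional_smul {a : ℕ → ℝ} {y : X}
    (h : HasSum (fun n ↦ a n • x n) y (conditional ℕ)) {c : ℝ} (hc : 0 < c)
    (hxc : ∀ n, c ≤ ‖x n‖) : Tendsto a atTop (𝓝 0) := by
  refine squeeze_zero_norm (fun n ↦ ?_) ((h.conditional_tendsto_zero.norm.div_const c).trans_eq
    (by simp))
  rw [le_div_iff₀ hc, norm_smul]
  exact mul_le_mul_of_nonneg_left (hxc n) (norm_nonneg _)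

-- Unlike Mathlib's `SchauderBasis`, continuity of the coefficient functionals is not assumed.
def IsSchauderBasis (x : ℕ → X) : Prop :=
  ∀ y, ∃! a : ℕ → ℝ, HasSum (fun n ↦ a n • x n) y (conditional ℕ)

def ShiftBounded (x : ℕ → X) (B : ℝ≥0) : Prop :=
  ∀ (s : Finset ℕ) (a : ℕ → ℝ), ‖∑ n ∈ s, a n • x (n + 1)‖ ≤ B * ‖∑ n ∈ s, a n • x n‖

namespace IsSchauderBasis

noncomputable def coeff (hx : IsSchauderBasis x) (y : X) : ℕ → ℝ := (hx y).exists.choose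

lemma hasSum_coeff (hx : IsSchauderBasis x) (y : X) :
    HasSum (fun n ↦ hx.coeff y n • x n) y (conditional ℕ) :=
  (hx y).exists.choose_spec

lemma coeff_eq_of_hasSum (hx : IsSchauderBasis x) {y : X} {a : ℕ → ℝ}
    (h : HasSum (fun n ↦ a n • x n) y (conditional ℕ)) : hx.coeff y = a :=
  (hx y).unique (hx.hasSum_coeff y) h

lemma eq_zero_of_coeff_eq_zero (hx : IsSchauderBasis x) {y : X} (hy : hx.coeff y = 0) :
    y = 0 :=
  (hx.hasSum_coeff y).unique (by simp [hy, hasSum_zero])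

lemma ne_zero (hx : IsSchauderBasis x) (k : ℕ) : x k ≠ 0 := by
  intro hk
  have hsingle : (fun n ↦ (Pi.single k 1 : ℕ → ℝ) n • x n) = 0 := by
    ext n
    rcases eq_or_ne n k with rfl | h <;> simp [*]
  have h0 : HasSum (fun n ↦ (0 : ℕ → ℝ) n • x n) 0 (conditional ℕ) := by simp
  have h1 : HasSum (fun n ↦ (Pi.single k 1 : ℕ → ℝ) n • x n) 0 (conditional ℕ) := by
    rw [hsingle]
    exact hasSum_zero
  simpa using congrFun ((hx 0).unique h1 h0) k

variable [CompleteSpace X]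

noncomputable def shift (hx : IsSchauderBasis x) (y : X) : X :=
  ∑'[conditional ℕ] n, hx.coeff y n • x (n + 1)

lemma hasSum_shift (hx : IsSchauderBasis x) {B : ℝ≥0} (hB : ShiftBounded x B) (y : X) :
    HasSum (fun n ↦ hx.coeff y n • x (n + 1)) (hx.shift y) (conditional ℕ) :=
  (Summable.conditional_of_norm_sum_le B.2 (fun s ↦ hB s _)
    (hx.hasSum_coeff y).summable).hasSum

lemma norm_shift_sub_shift_le (hx : IsSchauderBasis x) {B : ℝ≥0} (hB : ShiftBounded x B)
    (y z : X) : ‖hx.shift y - hx.shift z‖ ≤ B * ‖y - z‖ :=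
  norm_le_of_hasSum_conditional
    (fun N ↦ by simpa [sub_smul] using hB (Finset.range N) (hx.coeff y - hx.coeff z))
    ((hx.hasSum_coeff y).sub (hx.hasSum_coeff z))
    ((hx.hasSum_shift hB y).sub (hx.hasSum_shift hB z))

lemma hasSum_smul_add_shift (hx : IsSchauderBasis x) {B : ℝ≥0} (hB : ShiftBounded x B)
    (t : ℝ) (u : X) :
    HasSum (fun n ↦ (Nat.casesOn n t (hx.coeff u) : ℝ) • x n) (t • x 0 + hx.shift u)
      (conditional ℕ) :=
  HasSum.conditional_zero_add (f := fun n ↦ (Nat.casesOn n t (hx.coeff u) : ℝ) • x n)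
    (hx.hasSum_shift hB u)

noncomputable def retractedShift (hx : IsSchauderBasis x) (u : X) : X :=
  radialRetraction ((1 - ‖u‖) • x 0 + hx.shift u)

lemma lipschitzWith_retractedShift (hx : IsSchauderBasis x) {B : ℝ≥0} (hB : ShiftBounded x B) :
    LipschitzWith (2 * (‖x 0‖₊ + B)) hx.retractedShift := by
  refine LipschitzWith.of_dist_le_mul fun u v ↦ ?_
  rw [dist_eq_norm, dist_eq_norm]
  push_cast
  have hinner : ‖((1 - ‖u‖) • x 0 + hx.shift u) - ((1 - ‖v‖) • x 0 + hx.shift v)‖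
      ≤ (‖x 0‖ + B) * ‖u - v‖ := calc
    _ = ‖(‖v‖ - ‖u‖) • x 0 + (hx.shift u - hx.shift v)‖ := by congr 1; module
    _ ≤ |‖v‖ - ‖u‖| * ‖x 0‖ + B * ‖u - v‖ := by
        rw [← Real.norm_eq_abs, ← norm_smul]
        exact norm_add_le_of_le le_rfl (hx.norm_shift_sub_shift_le hB u v)
    _ ≤ (‖x 0‖ + B) * ‖u - v‖ := by
        have := abs_norm_sub_norm_le v u
        rw [norm_sub_rev] at this
        nlinarith [norm_nonneg (x 0)]
  calc ‖hx.retractedShift u - hx.retractedShift v‖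
      ≤ 2 * ‖((1 - ‖u‖) • x 0 + hx.shift u) - ((1 - ‖v‖) • x 0 + hx.shift v)‖ := by
        simpa [retractedShift] using (lipschitzWith_radialRetraction (E := X)).norm_sub_le _ _
    _ ≤ 2 * ((‖x 0‖ + B) * ‖u - v‖) := by gcongr
    _ = _ := by ring

lemma retractedShift_ne (hx : IsSchauderBasis x) {B : ℝ≥0} (hB : ShiftBounded x B) {c : ℝ}
    (hc : 0 < c) (hxc : ∀ n, c ≤ ‖x n‖) (u : X) : hx.retractedShift u ≠ u := by
  intro hfix
  set z := (1 - ‖u‖) • x 0 + hx.shift u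
  set m := max 1 ‖z‖
  set a := hx.coeff u
  have hm : 1 ≤ m := le_max_left _ _
  have hzu : z = m • u := by
    rw [← hfix, retractedShift, radialRetraction, smul_inv_smul₀ (by positivity)]
  have hcz : hx.coeff z = fun n ↦ m * a n :=
    hx.coeff_eq_of_hasSum (by simpa [hzu, smul_smul] using (hx.hasSum_coeff u).const_smul m)
  have hcoeff : (fun n ↦ m * a n) = fun n ↦ (Nat.casesOn n (1 - ‖u‖) a : ℝ) :=
    hcz.symm.trans (hx.coeff_eq_of_hasSum (hx.hasSum_smul_add_shift hB _ u))
  have h0 : m * a 0 = 1 - ‖u‖ := congrFun hcoeff 0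
  have hsucc n : m * a (n + 1) = a n := congrFun hcoeff (n + 1)
  have ha0 : a 0 = 0 := by
    rcases hm.eq_or_lt with hm1 | hm1
    · have hconst n : a n = a 0 := by
        induction n with
        | zero => rfl
        | succ n ih => rw [← ih, ← hsucc n, ← hm1, one_mul]
      have := tendsto_zero_of_hasSum_conditional_smul (hx.hasSum_coeff u) hc hxc
      exact tendsto_nhds_unique (tendsto_const_nhds.congr fun n ↦ (hconst n).symm) this
    · have : ‖u‖ = 1 := by
        rw [← hfix]
        exact norm_radialRetraction_of_one_lt (lt_max_iff.1 hm1 |>.resolve_left (lt_irrefl 1))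
      simpa [this, (by positivity : m ≠ 0)] using h0
  have ha n : a n = 0 := by
    induction n with
    | zero => exact ha0
    | succ n ih => simpa [ih, (by positivity : m ≠ 0)] using hsucc n
  have hu : u = 0 := hx.eq_zero_of_coeff_eq_zero (funext ha)
  simp [ha0, hu] at h0

lemma exists_retractedShift_eq_radialRetraction_smul (hx : IsSchauderBasis x) {B : ℝ≥0}
    (hB : ShiftBounded x B) {M : ℝ} (hM : ∀ n, ‖x n‖ ≤ M) {s : ℝ} (hs : 1 < s) :
    ∃ w : X, ‖w‖ ≤ 1 ∧ hx.retractedShift w = radialRetraction (s • w) := by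
  have hs0 : 0 < s := by linarith
  obtain ⟨v, hv⟩ : ∃ v, HasSum (fun n ↦ s⁻¹ ^ n • x n) v (conditional ℕ) := by
    have hgeom : Summable fun n : ℕ ↦ M * s⁻¹ ^ n :=
      (summable_geometric_of_lt_one (by positivity) (inv_lt_one_of_one_lt₀ hs)).mul_left M
    refine ⟨_, (hgeom.of_norm_bounded fun n ↦ ?_).hasSum.mono_left (conditional ℕ).le_atTop⟩
    rw [norm_smul, norm_pow, norm_inv, Real.norm_of_nonneg hs0.le, mul_comm]
    exact mul_le_mul_of_nonneg_right (hM n) (by positivity)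
  set δ := (s + ‖v‖)⁻¹
  have hδ : 0 < δ := by positivity
  have hw : ‖δ • v‖ = δ * ‖v‖ := norm_smul_of_nonneg hδ.le v
  have hδv : δ * (s + ‖v‖) = 1 := inv_mul_cancel₀ (by positivity)
  refine ⟨δ • v, by rw [hw, inv_mul_le_one₀ (by positivity)]; linarith, ?_⟩
  have hcw : hx.coeff (δ • v) = fun n ↦ δ * s⁻¹ ^ n :=
    hx.coeff_eq_of_hasSum (by simpa [smul_smul] using hv.const_smul δ)
  -- `(1 - ‖w‖) x₀ + S w` and `s w` have the same coefficients `s δ s⁻ⁿ`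
  have hterms : (fun n ↦ (Nat.casesOn n (1 - ‖δ • v‖) (hx.coeff (δ • v)) : ℝ) • x n)
      = fun n ↦ (s * δ) • s⁻¹ ^ n • x n := by
    ext (_ | n)
    · change (1 - ‖δ • v‖) • x 0 = (s * δ) • s⁻¹ ^ 0 • x 0
      rw [hw, pow_zero, one_smul]
      congr 1
      linear_combination -hδv
    · change hx.coeff (δ • v) n • x (n + 1) = _
      simp only [hcw, smul_smul, pow_succ]
      congr 1
      field_simp
  have key : (1 - ‖δ • v‖) • x 0 + hx.shift (δ • v) = s • δ • v := by
    refine (hx.hasSum_smul_add_shift hB _ _).unique ?_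
    rw [hterms, smul_smul]
    exact hv.const_smul _
  rw [retractedShift, key]

end IsSchauderBasis

end SchauderBasis

lemma sInf_image_eq_zero_of_forall_le {α : Type*} {f : α → ℝ} {S : Set α}
    (hf : ∀ y ∈ S, 0 ≤ f y) (h : ∀ ε > 0, ∃ y ∈ S, f y ≤ ε) : sInf (f '' S) = 0 := by
  obtain ⟨y, hy, -⟩ := h 1 one_pos
  refine IsGLB.csInf_eq ⟨forall_mem_image.2 hf, fun b hb ↦ ?_⟩ ⟨f y, mem_image_of_mem f hy⟩
  by_contra! hb0
  obtain ⟨z, hz, hfz⟩ := h (b / 2) (by positivity)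
  linarith [hb (mem_image_of_mem f hz)]

lemma le_mul_rpow_of_le_mul_of_le_mul {a d s K lam α : ℝ} (hd : 0 ≤ d) (hs : 0 < s)
    (hK : 0 ≤ K) (hα0 : 0 ≤ α) (hα1 : α ≤ 1) (had : a ≤ K * d) (has : a ≤ K * s)
    (hlam : K * s ^ (1 - α) ≤ lam) : a ≤ lam * d ^ α := by
  have hsplit (t : ℝ) (ht : 0 ≤ t) : t = t ^ (1 - α) * t ^ α := by
    rw [← Real.rpow_add' ht (by simp), sub_add_cancel, Real.rpow_one]
  have hα1' : 0 ≤ 1 - α := by linarith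
  rcases le_total d s with hds | hsd
  · calc a ≤ K * (d ^ (1 - α) * d ^ α) := hsplit d hd ▸ had
      _ ≤ K * (s ^ (1 - α) * d ^ α) := by gcongr
      _ ≤ lam * d ^ α := by rw [← mul_assoc]; gcongr
  · calc a ≤ K * (s ^ (1 - α) * s ^ α) := hsplit s hs.le ▸ has
      _ ≤ K * (s ^ (1 - α) * d ^ α) := by gcongr
      _ ≤ lam * d ^ α := by rw [← mul_assoc]; gcongr

lemma exists_mul_rpow_le {K α lam : ℝ} (hα : α < 1) (hlam : 0 < lam) :
    ∃ s ∈ Ioc (0 : ℝ) 1, K * s ^ (1 - α) ≤ lam := by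
  have hcont := (Real.continuousAt_rpow_const 0 (1 - α) (Or.inr (by linarith))).tendsto
  rw [Real.zero_rpow (by linarith)] at hcont
  have hlim : Tendsto (fun s : ℝ ↦ K * s ^ (1 - α)) (𝓝[>] 0) (𝓝 0) := by
    simpa using (hcont.const_mul K).mono_left nhdsWithin_le_nhds
  obtain ⟨s, hs, hs'⟩ := ((hlim.eventually (ge_mem_nhds hlam)).and (Ioc_mem_nhdsGT one_pos)).exists
  exact ⟨s, hs', hs⟩

section Rescaling

variable {E : Type*} [NormedAddCommGroup E] [NormedSpace ℝ E] {F : E → E} {s : ℝ}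

noncomputable def rescaledMap (F : E → E) (s : ℝ) (y : E) : E :=
  s • F (radialRetraction (s⁻¹ • y))

lemma norm_rescaledMap_le (hF : MapsTo F (closedBall 0 1) (closedBall 0 1)) (hs : 0 ≤ s)
    (y : E) : ‖rescaledMap F s y‖ ≤ s := by
  have := mem_closedBall_zero_iff.1 (hF (mem_closedBall_zero_iff.2
    (norm_radialRetraction_le_one (s⁻¹ • y))))
  rw [rescaledMap, norm_smul, Real.norm_of_nonneg hs]
  exact mul_le_of_le_one_right hs this

lemma rescaledMap_ne (hF : MapsTo F (closedBall 0 1) (closedBall 0 1))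
    (hfix : ∀ y ∈ closedBall (0 : E) 1, F y ≠ y) (hs : 0 < s) (y : E) : rescaledMap F s y ≠ y := by
  intro hy
  have hys : ‖s⁻¹ • y‖ ≤ 1 := by
    rw [norm_smul, Real.norm_of_nonneg (by positivity), inv_mul_le_one₀ hs, ← hy]
    exact norm_rescaledMap_le hF hs.le y
  refine hfix _ (mem_closedBall_zero_iff.2 hys) ?_
  calc F (s⁻¹ • y) = s⁻¹ • rescaledMap F s y := by
        rw [rescaledMap, radialRetraction_of_norm_le_one hys, inv_smul_smul₀ hs.ne']
    _ = s⁻¹ • y := by rw [hy]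

lemma norm_rescaledMap_sub_le {L : ℝ≥0} (hF : LipschitzOnWith L F (closedBall 0 1))
    (hs : 0 < s) (y z : E) :
    ‖rescaledMap F s y - rescaledMap F s z‖ ≤ 2 * L * ‖y - z‖ := by
  have hr (v : E) : radialRetraction v ∈ closedBall (0 : E) 1 :=
    mem_closedBall_zero_iff.2 (norm_radialRetraction_le_one v)
  calc ‖rescaledMap F s y - rescaledMap F s z‖
      = s * ‖F (radialRetraction (s⁻¹ • y)) - F (radialRetraction (s⁻¹ • z))‖ := by
        rw [rescaledMap, rescaledMap, ← smul_sub, norm_smul, Real.norm_of_nonneg hs.le]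
    _ ≤ s * (L * (2 * ‖s⁻¹ • y - s⁻¹ • z‖)) := by
        gcongr
        exact hF.norm_sub_le_of_le (hr _) (hr _)
          (by simpa using lipschitzWith_radialRetraction.norm_sub_le (s⁻¹ • y) (s⁻¹ • z))
    _ = 2 * L * ‖y - z‖ := by
        rw [← smul_sub, norm_smul, Real.norm_of_nonneg (by positivity)]
        field_simp

lemma norm_smul_sub_rescaledMap {w : E} (hw : ‖w‖ ≤ 1) (hs : 0 < s) :
    ‖s • w - rescaledMap F s (s • w)‖ = s * ‖w - F w‖ := by
  rw [rescaledMap, inv_smul_smul₀ hs.ne', radialRetraction_of_norm_le_one hw, ← smul_sub,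
    norm_smul, Real.norm_of_nonneg hs.le]

theorem exists_holder_of_lipschitzOnWith {L : ℝ≥0}
    (hmaps : MapsTo F (closedBall 0 1) (closedBall 0 1))
    (hlip : LipschitzOnWith L F (closedBall 0 1)) (hfix : ∀ y ∈ closedBall (0 : E) 1, F y ≠ y)
    (hdisp : ∀ ε > 0, ∃ y ∈ closedBall (0 : E) 1, ‖y - F y‖ ≤ ε)
    {α : ℝ} (hα0 : 0 ≤ α) (hα1 : α < 1) {lam : ℝ} (hlam : 0 < lam) :
    ∃ T : E → E, MapsTo T (closedBall 0 1) (closedBall 0 1) ∧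
      (∀ y ∈ closedBall (0 : E) 1, T y ≠ y) ∧
      (∀ y ∈ closedBall (0 : E) 1, ∀ z ∈ closedBall (0 : E) 1,
        ‖T y - T z‖ ≤ lam * ‖y - z‖ ^ α) ∧
      sInf ((fun y ↦ ‖y - T y‖) '' closedBall 0 1) = 0 := by
  obtain ⟨s, ⟨hs0, hs1⟩, hs⟩ := exists_mul_rpow_le (K := 2 * L + 2) hα1 hlam
  have hT := norm_rescaledMap_le hmaps hs0.le
  refine ⟨rescaledMap F s, fun y _ ↦ mem_closedBall_zero_iff.2 ((hT y).trans hs1),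
    fun y _ ↦ rescaledMap_ne hmaps hfix hs0 y, fun y _ z _ ↦ ?_, ?_⟩
  · refine le_mul_rpow_of_le_mul_of_le_mul (norm_nonneg _) hs0 (by positivity) hα0 hα1.le
      ((norm_rescaledMap_sub_le hlip hs0 y z).trans (by gcongr; linarith)) ?_ hs
    have := norm_sub_le_of_le (hT y) (hT z)
    nlinarith [L.2]
  · refine sInf_image_eq_zero_of_forall_le (fun _ _ ↦ norm_nonneg _) fun ε hε ↦ ?_
    obtain ⟨w, hw, hFw⟩ := hdisp ε hε
    have hw' := mem_closedBall_zero_iff.1 hw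
    refine ⟨s • w, mem_closedBall_zero_iff.2 ?_, ?_⟩
    · rw [norm_smul, Real.norm_of_nonneg hs0.le]
      nlinarith [norm_nonneg w]
    · rw [norm_smul_sub_rescaledMap hw' hs0]
      nlinarith [norm_nonneg (w - F w)]

end Rescaling

/-- Let `X` be a real Banach space with a spreading Schauder basis.  Then
for every `α ∈ (0,1)` and `λ > 0` there exists a fixed-point-free `α`-Hölder `λ`-Lipschitz
map `T : B_X → B_X` with `d(T, B_X) = 0`. -/
theorem statement14 {X : Type*} [NormedAddCommGroup X] [NormedSpace ℝ X] [CompleteSpace X]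
    (x : ℕ → X)
    (hbasis : ∀ y : X, ∃! a : ℕ → ℝ,
      Filter.Tendsto (fun N : ℕ => ∑ i ∈ Finset.range N, a i • x i)
        Filter.atTop (nhds y))
    (hspread : ∀ φ : ℕ → ℕ, StrictMono φ → ∃ A B : ℝ, 0 < A ∧ 0 < B ∧
      ∀ (s : Finset ℕ) (a : ℕ → ℝ),
        A * ‖∑ n ∈ s, a n • x n‖ ≤ ‖∑ n ∈ s, a n • x (φ n)‖ ∧
        ‖∑ n ∈ s, a n • x (φ n)‖ ≤ B * ‖∑ n ∈ s, a n • x n‖)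
    (α : ℝ) (hα : α ∈ Set.Ioo (0 : ℝ) 1) (lam : ℝ) (hlam : 0 < lam) :
    ∃ T : X → X,
      Set.MapsTo T (Metric.closedBall (0 : X) 1) (Metric.closedBall (0 : X) 1) ∧
      (∀ y ∈ Metric.closedBall (0 : X) 1, T y ≠ y) ∧
      (∀ y ∈ Metric.closedBall (0 : X) 1, ∀ z ∈ Metric.closedBall (0 : X) 1,
        ‖T y - T z‖ ≤ lam * ‖y - z‖ ^ α) ∧
      sInf ((fun y => ‖y - T y‖) '' Metric.closedBall (0 : X) 1) = 0 := by
  have hx : IsSchauderBasis x := by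
    simpa only [IsSchauderBasis, hasSum_conditional_iff_tendsto] using hbasis
  obtain ⟨c, hc, hxc⟩ := IsSpreading.exists_pos_le_norm hspread hx.ne_zero
  obtain ⟨M, hM⟩ := IsSpreading.bddAbove_range_norm hspread hx.ne_zero
  obtain ⟨_, B, -, hB0, hB⟩ := hspread (· + 1) fun _ _ h ↦ Nat.add_lt_add_right h 1
  have hshift : ShiftBounded x ⟨B, hB0.le⟩ := fun s a ↦ (hB s a).2
  refine exists_holder_of_lipschitzOnWith (F := hx.retractedShift)
    (fun u _ ↦ mem_closedBall_zero_iff.2 (norm_radialRetraction_le_one _))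
    (hx.lipschitzWith_retractedShift hshift).lipschitzOnWith
    (fun u _ ↦ hx.retractedShift_ne hshift hc hxc u) (fun ε hε ↦ ?_) hα.1.le hα.2 hlam
  obtain ⟨w, hw, hFw⟩ := hx.exists_retractedShift_eq_radialRetraction_smul hshift
    (fun n ↦ hM ⟨n, rfl⟩) (lt_add_of_pos_right 1 hε)
  refine ⟨w, mem_closedBall_zero_iff.2 hw, ?_⟩
  rw [hFw, norm_sub_rev]
  simpa using norm_radialRetraction_smul_sub_le hw (le_add_of_nonneg_right hε.le)
end

section
/- Let H be an infinite-dimensional real Hilbert space. Then for every α ∈ (0,1) and every λ > 0 there exists a fixed-point-free α-Hölder λ-Lipschitz map T : B_H → B_H with d(T,B_H) = 0. -/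
/-!
Kakutani's map `x ↦ (1 - ‖x‖) e₀ + U x`, with `U` the shift `eₙ ↦ eₙ₊₁` along an orthonormal
sequence, is a `2`-Lipschitz self-map of the unit ball without fixed points: at a fixed point all
coordinates `⟪eₙ, x⟫` equal `1 - ‖x‖`, which forces `‖x‖ = 1` and then `x = U x = 0`. Its
displacement at the averages `m⁻¹ ∑_{n < m²} eₙ` is `m⁻¹ ‖e₀ - e_{m²}‖ → 0`.

Precomposing with the metric projection onto the ball and conjugating by the homothety of ratio
`r` gives a `2`-Lipschitz map with values in the ball of radius `r`, still fixed-point free and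
with minimal displacement `0`. Interpolating, `min (2r) (2d) ≤ (2r)^(1-α) (2d)^α ≤ λ d^α` once `r`
is small enough.
-/

open Metric Set Filter Topology

open scoped RealInnerProductSpace

section Transfer

variable {ι E : Type*} [NormedAddCommGroup E] [InnerProductSpace ℝ E] [CompleteSpace E]
  {v w : ι → E}

theorem Orthonormal.summable_inner_smul (hv : Orthonormal ℝ v) (hw : Orthonormal ℝ w) (x : E) :
    Summable fun i => ⟪v i, x⟫ • w i := by
  simpa [LinearIsometry.toSpanSingleton_apply] using
    (hw.orthogonalFamily.summable_iff_norm_sq_summable fun i => ⟪v i, x⟫).2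
      (by simpa using hv.inner_products_summable x)

noncomputable def Orthonormal.transfer (hv : Orthonormal ℝ v) (hw : Orthonormal ℝ w) :
    E →ₗ[ℝ] E where
  toFun x := ∑' i, ⟪v i, x⟫ • w i
  map_add' x y := by
    simp only [inner_add_right, add_smul]
    exact (hv.summable_inner_smul hw x).tsum_add (hv.summable_inner_smul hw y)
  map_smul' c x := by
    simp only [real_inner_smul_right, mul_smul, RingHom.id_apply]
    exact (hv.summable_inner_smul hw x).tsum_const_smul c

variable (hv : Orthonormal ℝ v) (hw : Orthonormal ℝ w)
include hv hw

theorem Orthonormal.transfer_apply (x : E) : hv.transfer hw x = ∑' i, ⟪v i, x⟫ • w i := rfl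

theorem Orthonormal.transfer_apply_self (j : ι) : hv.transfer hw (v j) = w j := by
  classical
  simp [transfer_apply, orthonormal_iff_ite.1 hv, ite_smul]

theorem Orthonormal.hasSum_inner_transfer (y x : E) :
    HasSum (fun i => ⟪v i, x⟫ * ⟪y, w i⟫) ⟪y, hv.transfer hw x⟫ := by
  have h := (hv.summable_inner_smul hw x).hasSum.mapL (innerSL ℝ y)
  simp only [innerSL_apply_apply, real_inner_smul_right] at h
  exact h

theorem Orthonormal.inner_transfer_eq_zero {y : E} (hy : ∀ i, ⟪y, w i⟫ = 0) (x : E) :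
    ⟪y, hv.transfer hw x⟫ = 0 :=
  (hv.hasSum_inner_transfer hw y x).unique (by simp [hy])

theorem Orthonormal.inner_transfer (j : ι) (x : E) : ⟪w j, hv.transfer hw x⟫ = ⟪v j, x⟫ := by
  classical
  refine (hv.hasSum_inner_transfer hw (w j) x).unique ?_
  convert hasSum_ite_eq j ⟪v j, x⟫ using 2 with i
  rw [orthonormal_iff_ite.1 hw]
  split_ifs with h h' h' <;> simp_all

theorem Orthonormal.norm_transfer_sq (x : E) : ‖hv.transfer hw x‖ ^ 2 = ∑' i, ⟪v i, x⟫ ^ 2 := by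
  rw [← real_inner_self_eq_norm_sq]
  refine ((hv.hasSum_inner_transfer hw _ x).tsum_eq.symm.trans (tsum_congr fun i => ?_))
  rw [real_inner_comm (w i), hv.inner_transfer hw, sq]

theorem Orthonormal.norm_transfer_le (x : E) : ‖hv.transfer hw x‖ ≤ ‖x‖ := by
  refine (pow_le_pow_iff_left₀ (norm_nonneg _) (norm_nonneg _) two_ne_zero).1 ?_
  simpa [hv.norm_transfer_sq hw] using hv.tsum_inner_products_le x

end Transfer

theorem exists_orthonormal_nat {H : Type*} [NormedAddCommGroup H] [InnerProductSpace ℝ H]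
    [CompleteSpace H] (hinf : ¬ FiniteDimensional ℝ H) : ∃ e : ℕ → H, Orthonormal ℝ e := by
  obtain ⟨w, b, -⟩ := exists_hilbertBasis ℝ H
  have : Infinite w := by
    by_contra hfin
    rw [not_infinite_iff_finite] at hfin
    have := Fintype.ofFinite w
    exact hinf (Module.Finite.of_basis b.toOrthonormalBasis.toBasis)
  exact ⟨b ∘ Infinite.natEmbedding w, b.orthonormal.comp _ (Infinite.natEmbedding w).injective⟩

section Kakutani

variable {H : Type*} [NormedAddCommGroup H] [InnerProductSpace ℝ H] [CompleteSpace H]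
  {e : ℕ → H} (he : Orthonormal ℝ e)
include he

noncomputable def Orthonormal.shift : H →ₗ[ℝ] H :=
  he.transfer (he.comp (· + 1) (add_left_injective 1))

theorem Orthonormal.inner_shift_zero (x : H) : ⟪e 0, he.shift x⟫ = 0 :=
  he.inner_transfer_eq_zero _ (fun n => he.2 (Nat.succ_ne_zero n).symm) x

theorem Orthonormal.inner_shift_succ (n : ℕ) (x : H) : ⟪e (n + 1), he.shift x⟫ = ⟪e n, x⟫ :=
  he.inner_transfer (he.comp (· + 1) (add_left_injective 1)) n x

theorem Orthonormal.shift_apply_self (n : ℕ) : he.shift (e n) = e (n + 1) :=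
  he.transfer_apply_self (he.comp (· + 1) (add_left_injective 1)) n

noncomputable def kakutaniMap (x : H) : H := (1 - ‖x‖) • e 0 + he.shift x

theorem norm_kakutaniMap_le {x : H} (hx : ‖x‖ ≤ 1) : ‖kakutaniMap he x‖ ≤ 1 :=
  calc ‖kakutaniMap he x‖ ≤ ‖(1 - ‖x‖) • e 0‖ + ‖he.shift x‖ := norm_add_le _ _
    _ ≤ (1 - ‖x‖) + ‖x‖ := by
      rw [norm_smul_of_nonneg (sub_nonneg.2 hx), he.1 0, mul_one]
      gcongr
      exact he.norm_transfer_le _ x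
    _ = 1 := sub_add_cancel 1 ‖x‖

theorem lipschitzWith_kakutaniMap : LipschitzWith 2 (kakutaniMap he) := by
  refine LipschitzWith.of_dist_le_mul fun x y => ?_
  have hxy : kakutaniMap he x - kakutaniMap he y = (‖y‖ - ‖x‖) • e 0 + he.shift (x - y) := by
    simp only [kakutaniMap, map_sub, sub_smul]
    abel
  rw [dist_eq_norm, dist_eq_norm, hxy]
  calc ‖(‖y‖ - ‖x‖) • e 0 + he.shift (x - y)‖
      ≤ |‖y‖ - ‖x‖| + ‖x - y‖ := by
        refine (norm_add_le _ _).trans (add_le_add ?_ (he.norm_transfer_le _ _))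
        rw [norm_smul, he.1 0, mul_one, Real.norm_eq_abs]
    _ ≤ ‖x - y‖ + ‖x - y‖ := by
        gcongr
        rw [abs_sub_comm]
        exact abs_norm_sub_norm_le x y
    _ = 2 * ‖x - y‖ := by ring

theorem inner_kakutaniMap_zero (x : H) : ⟪e 0, kakutaniMap he x⟫ = 1 - ‖x‖ := by
  rw [kakutaniMap, inner_add_right, real_inner_smul_right, real_inner_self_eq_norm_sq, he.1 0,
    he.inner_shift_zero]
  ring

theorem inner_kakutaniMap_succ (n : ℕ) (x : H) :
    ⟪e (n + 1), kakutaniMap he x⟫ = ⟪e n, x⟫ := by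
  rw [kakutaniMap, inner_add_right, real_inner_smul_right, he.2 (Nat.succ_ne_zero n),
    he.inner_shift_succ, mul_zero, zero_add]

theorem kakutaniMap_ne_self (x : H) : kakutaniMap he x ≠ x := by
  intro hfix
  have hcoeff : ∀ n, ⟪e n, x⟫ = 1 - ‖x‖ := by
    intro n
    induction n with
    | zero => rw [← inner_kakutaniMap_zero he x, hfix]
    | succ n ih => rw [← ih, ← inner_kakutaniMap_succ he n x, hfix]
  have hx1 : ‖x‖ = 1 := by
    have hlim := (he.inner_products_summable x).tendsto_atTop_zero
    simp only [hcoeff] at hlim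
    have := tendsto_nhds_unique tendsto_const_nhds hlim
    rw [sq_eq_zero_iff, norm_eq_zero, sub_eq_zero] at this
    exact this.symm
  have hshift : he.shift x = 0 := by
    simp [Orthonormal.shift, Orthonormal.transfer_apply, hcoeff, hx1]
  have : x = 0 := by rw [← hfix, kakutaniMap, hshift, hx1]; simp
  simp [this] at hx1

omit [CompleteSpace H] in
theorem Orthonormal.norm_sum_range (k : ℕ) : ‖∑ n ∈ Finset.range k, e n‖ = √k := by
  rw [eq_comm, Real.sqrt_eq_iff_eq_sq (Nat.cast_nonneg k) (norm_nonneg _)]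
  simpa [LinearIsometry.toSpanSingleton_apply] using
    (he.orthogonalFamily.norm_sum (fun _ => (1 : ℝ)) (Finset.range k)).symm

theorem exists_norm_sub_kakutaniMap_lt {ε : ℝ} (hε : 0 < ε) :
    ∃ x ∈ closedBall (0 : H) 1, ‖x - kakutaniMap he x‖ < ε := by
  obtain ⟨m, hm⟩ := exists_nat_gt (2 / ε)
  have hm0 : (0 : ℝ) < m := (div_pos two_pos hε).trans hm
  -- `m²` vectors, so that their average has norm exactly `1`
  set u := (m : ℝ)⁻¹ • ∑ n ∈ Finset.range (m ^ 2), e n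
  have hu : ‖u‖ = 1 := by
    rw [norm_smul_of_nonneg (inv_nonneg.2 hm0.le), he.norm_sum_range, Nat.cast_pow,
      Real.sqrt_sq hm0.le, inv_mul_cancel₀ hm0.ne']
  have hdisp : u - kakutaniMap he u = (m : ℝ)⁻¹ • (e 0 - e (m ^ 2)) := by
    simp only [u, kakutaniMap, hu, sub_self, zero_smul, zero_add, map_smul, map_sum,
      he.shift_apply_self, ← smul_sub, ← Finset.sum_sub_distrib, Finset.sum_range_sub']
  refine ⟨u, mem_closedBall_zero_iff.2 hu.le, ?_⟩
  calc ‖u - kakutaniMap he u‖ ≤ (m : ℝ)⁻¹ * (‖e 0‖ + ‖e (m ^ 2)‖) := by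
        rw [hdisp, norm_smul_of_nonneg (inv_nonneg.2 hm0.le)]
        gcongr
        exact norm_sub_le _ _
    _ = 2 / m := by rw [he.1, he.1]; ring
    _ < ε := (div_lt_iff₀ hm0).2 (by rwa [div_lt_iff₀ hε, mul_comm] at hm)

end Kakutani

theorem exists_lipschitzWith_one_retraction {F : Type*} [NormedAddCommGroup F]
    [InnerProductSpace ℝ F] {K : Set F} (hne : K.Nonempty) (hc : IsComplete K) (hK : Convex ℝ K) :
    ∃ P : F → F, (∀ x, P x ∈ K) ∧ (∀ x ∈ K, P x = x) ∧ LipschitzWith 1 P := by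
  choose P hPK hP using exists_norm_eq_iInf_of_complete_convex hne hc hK
  have hvar : ∀ x, ∀ y ∈ K, ⟪x - P x, y - P x⟫ ≤ 0 := fun x =>
    (norm_eq_iInf_iff_real_inner_le_zero hK (hPK x)).1 (hP x)
  refine ⟨P, hPK, fun x hx => ?_, LipschitzWith.of_dist_le_mul fun x y => ?_⟩
  · simpa [sub_eq_zero, eq_comm] using real_inner_self_nonpos.1 (hvar x x hx)
  -- sum of the variational inequalities at `x` and `y`
  have key : ‖P x - P y‖ ^ 2 ≤ ‖x - y‖ * ‖P x - P y‖ :=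
    calc ‖P x - P y‖ ^ 2
        = ⟪x - y, P x - P y⟫ + (⟪x - P x, P y - P x⟫ + ⟪y - P y, P x - P y⟫) := by
          have hdecomp : P x - P y = (x - y) - (x - P x) + (y - P y) := by abel
          rw [← real_inner_self_eq_norm_sq]
          nth_rw 1 [hdecomp]
          rw [inner_add_left, inner_sub_left, ← neg_sub (P x) (P y), inner_neg_right]
          ring
      _ ≤ ⟪x - y, P x - P y⟫ := by linarith [hvar x (P y) (hPK y), hvar y (P x) (hPK x)]
      _ ≤ ‖x - y‖ * ‖P x - P y‖ := real_inner_le_norm _ _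
  rw [dist_eq_norm, dist_eq_norm, NNReal.coe_one, one_mul]
  nlinarith [norm_nonneg (P x - P y), norm_nonneg (x - y)]

theorem min_le_rpow_mul_rpow {a b α : ℝ} (ha : 0 ≤ a) (hb : 0 ≤ b) (hα0 : 0 ≤ α) (hα1 : α ≤ 1) :
    min a b ≤ a ^ (1 - α) * b ^ α := by
  have hmin : 0 ≤ min a b := le_min ha hb
  calc min a b = min a b ^ (1 - α) * min a b ^ α := by
        rw [← Real.rpow_add' hmin (by norm_num), sub_add_cancel, Real.rpow_one]
    _ ≤ a ^ (1 - α) * b ^ α :=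
        mul_le_mul (Real.rpow_le_rpow hmin (min_le_left a b) (sub_nonneg.2 hα1))
          (Real.rpow_le_rpow hmin (min_le_right a b) hα0) (by positivity) (by positivity)

theorem LipschitzWith.norm_sub_le_rpow_of_norm_le {E F : Type*} [SeminormedAddCommGroup E]
    [SeminormedAddCommGroup F] {f : E → F} {K : NNReal} (hf : LipschitzWith K f) {r : ℝ}
    (hr : ∀ x, ‖f x‖ ≤ r) {α : ℝ} (hα0 : 0 ≤ α) (hα1 : α ≤ 1) (x y : E) :
    ‖f x - f y‖ ≤ (2 * r) ^ (1 - α) * K ^ α * ‖x - y‖ ^ α :=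
  calc ‖f x - f y‖ ≤ min (2 * r) (K * ‖x - y‖) :=
        le_min ((_root_.norm_sub_le _ _).trans (by linarith [hr x, hr y])) (hf.norm_sub_le x y)
    _ ≤ (2 * r) ^ (1 - α) * (K * ‖x - y‖) ^ α :=
        min_le_rpow_mul_rpow (by linarith [norm_nonneg (f x), hr x]) (by positivity) hα0 hα1
    _ = (2 * r) ^ (1 - α) * K ^ α * ‖x - y‖ ^ α := by
        rw [Real.mul_rpow K.coe_nonneg (norm_nonneg _), mul_assoc]

section Rescaling

variable {E : Type*} [NormedAddCommGroup E] [NormedSpace ℝ E]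

theorem LipschitzWith.const_smul_comp_inv_smul {S : E → E} {K : NNReal} (hS : LipschitzWith K S)
    {r : ℝ} (hr : 0 < r) : LipschitzWith K fun x => r • S (r⁻¹ • x) := by
  refine LipschitzWith.of_dist_le_mul fun x y => ?_
  rw [dist_smul₀, Real.norm_of_nonneg hr.le]
  calc r * dist (S (r⁻¹ • x)) (S (r⁻¹ • y)) ≤ r * (K * dist (r⁻¹ • x) (r⁻¹ • y)) := by
        gcongr
        exact hS.dist_le_mul _ _
    _ = K * dist x y := by
        rw [dist_smul₀, Real.norm_of_nonneg (inv_nonneg.2 hr.le)]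
        field_simp

theorem exists_pos_le_one_rpow_mul_le {α : ℝ} (hα1 : α < 1) (c : ℝ) {lam : ℝ} (hlam : 0 < lam) :
    ∃ r : ℝ, 0 < r ∧ r ≤ 1 ∧ (2 * r) ^ (1 - α) * c ≤ lam := by
  have hcont : ContinuousAt (fun r : ℝ => (2 * r) ^ (1 - α) * c) 0 :=
    ((Real.continuousAt_rpow_const _ _ (Or.inr (by linarith))).comp (by fun_prop)).mul
      continuousAt_const
  have hlim : Tendsto (fun r : ℝ => (2 * r) ^ (1 - α) * c) (𝓝[>] 0) (𝓝 0) := by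
    simpa [Real.zero_rpow (by linarith : 1 - α ≠ 0)] using
      hcont.tendsto.mono_left nhdsWithin_le_nhds
  have hev : ∀ᶠ r in 𝓝[>] (0 : ℝ), 0 < r ∧ r ≤ 1 ∧ (2 * r) ^ (1 - α) * c ≤ lam := by
    filter_upwards [self_mem_nhdsWithin, nhdsWithin_le_nhds (Iic_mem_nhds one_pos),
      hlim.eventually (gt_mem_nhds hlam)] with r hr hr1 hrlam
    exact ⟨hr, hr1, hrlam.le⟩
  exact hev.exists

theorem exists_fixedPointFree_holder_of_lipschitzWith {S : E → E} {K : NNReal}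
    (hS : ∀ x, ‖S x‖ ≤ 1) (hSK : LipschitzWith K S) (hfix : ∀ x, S x ≠ x)
    (hdisp : ∀ ε > 0, ∃ x ∈ closedBall (0 : E) 1, ‖x - S x‖ < ε)
    {α : ℝ} (hα0 : 0 ≤ α) (hα1 : α < 1) {lam : ℝ} (hlam : 0 < lam) :
    ∃ T : E → E,
      MapsTo T (closedBall (0 : E) 1) (closedBall (0 : E) 1) ∧
      (∀ y ∈ closedBall (0 : E) 1, T y ≠ y) ∧
      (∀ y ∈ closedBall (0 : E) 1, ∀ z ∈ closedBall (0 : E) 1,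
        ‖T y - T z‖ ≤ lam * ‖y - z‖ ^ α) ∧
      sInf ((fun y => ‖y - T y‖) '' closedBall (0 : E) 1) = 0 := by
  obtain ⟨r, hr, hr1, hrlam⟩ := exists_pos_le_one_rpow_mul_le hα1 (K ^ α) hlam
  have hT : ∀ x, ‖r • S (r⁻¹ • x)‖ ≤ r := fun x => by
    rw [norm_smul_of_nonneg hr.le]
    exact mul_le_of_le_one_right hr.le (hS _)
  refine ⟨fun x => r • S (r⁻¹ • x), fun x _ => mem_closedBall_zero_iff.2 ((hT x).trans hr1),
    fun y _ h => hfix _ ((eq_inv_smul_iff₀ hr.ne').2 h), fun y _ z _ => ?_, ?_⟩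
  · calc _ ≤ (2 * r) ^ (1 - α) * K ^ α * ‖y - z‖ ^ α :=
          (hSK.const_smul_comp_inv_smul hr).norm_sub_le_rpow_of_norm_le hT hα0 hα1.le y z
      _ ≤ lam * ‖y - z‖ ^ α := by gcongr
  refine csInf_eq_of_forall_ge_of_forall_gt_exists_lt ((nonempty_closedBall.2 zero_le_one).image _)
    (by rintro _ ⟨y, -, rfl⟩; exact norm_nonneg _) fun ε hε => ?_
  obtain ⟨x, hx, hxε⟩ := hdisp ε hε
  rw [mem_closedBall_zero_iff] at hx
  refine ⟨_, ⟨r • x, ?_, rfl⟩, ?_⟩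
  · rw [mem_closedBall_zero_iff, norm_smul_of_nonneg hr.le]
    exact mul_le_one₀ hr1 (norm_nonneg x) hx
  calc ‖r • x - r • S (r⁻¹ • r • x)‖ = r * ‖x - S x‖ := by
        rw [inv_smul_smul₀ hr.ne', ← smul_sub, norm_smul_of_nonneg hr.le]
    _ ≤ ‖x - S x‖ := mul_le_of_le_one_left (norm_nonneg _) hr1
    _ < ε := hxε

end Rescaling

theorem exists_fixedPointFree_lipschitzWith_two {H : Type*} [NormedAddCommGroup H]
    [InnerProductSpace ℝ H] [CompleteSpace H] (hinf : ¬ FiniteDimensional ℝ H) :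
    ∃ S : H → H, (∀ x, ‖S x‖ ≤ 1) ∧ LipschitzWith 2 S ∧ (∀ x, S x ≠ x) ∧
      ∀ ε > 0, ∃ x ∈ closedBall (0 : H) 1, ‖x - S x‖ < ε := by
  obtain ⟨e, he⟩ := exists_orthonormal_nat hinf
  obtain ⟨P, hPB, hPfix, hPlip⟩ := exists_lipschitzWith_one_retraction
    (nonempty_closedBall.2 zero_le_one) isClosed_closedBall.isComplete (convex_closedBall (0 : H) 1)
  have hS : ∀ x, ‖kakutaniMap he (P x)‖ ≤ 1 := fun x =>
    norm_kakutaniMap_le he (mem_closedBall_zero_iff.1 (hPB x))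
  refine ⟨kakutaniMap he ∘ P, hS, by simpa using (lipschitzWith_kakutaniMap he).comp hPlip,
    fun x hfix => ?_, fun ε hε => ?_⟩
  · have hx : x ∈ closedBall (0 : H) 1 := hfix ▸ mem_closedBall_zero_iff.2 (hS x)
    exact kakutaniMap_ne_self he x (by rwa [Function.comp_apply, hPfix x hx] at hfix)
  · obtain ⟨x, hx, hxε⟩ := exists_norm_sub_kakutaniMap_lt he hε
    exact ⟨x, hx, by rwa [Function.comp_apply, hPfix x hx]⟩

/-- Let `H` be an infinite-dimensional real Hilbert space.  Then for every
`α ∈ (0,1)` and `λ > 0` there exists a fixed-point-free `α`-Hölder `λ`-Lipschitz map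
`T : B_H → B_H` with `d(T, B_H) = 0`. -/
theorem statement16 {H : Type*} [NormedAddCommGroup H] [InnerProductSpace ℝ H]
    [CompleteSpace H] (hinf : ¬ FiniteDimensional ℝ H)
    (α : ℝ) (hα : α ∈ Set.Ioo (0 : ℝ) 1) (lam : ℝ) (hlam : 0 < lam) :
    ∃ T : H → H,
      Set.MapsTo T (Metric.closedBall (0 : H) 1) (Metric.closedBall (0 : H) 1) ∧
      (∀ y ∈ Metric.closedBall (0 : H) 1, T y ≠ y) ∧
      (∀ y ∈ Metric.closedBall (0 : H) 1, ∀ z ∈ Metric.closedBall (0 : H) 1,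
        ‖T y - T z‖ ≤ lam * ‖y - z‖ ^ α) ∧
      sInf ((fun y => ‖y - T y‖) '' Metric.closedBall (0 : H) 1) = 0 := by
  obtain ⟨S, hS, hSK, hfix, hdisp⟩ := exists_fixedPointFree_lipschitzWith_two hinf
  exact exists_fixedPointFree_holder_of_lipschitzWith hS hSK hfix hdisp hα.1.le hα.2 hlam
end

section
/- Let X be an infinite-dimensional real Banach space and let (r_n)_{n≥1} be a decreasing null sequence of positive reals satisfying r_{n+k} ≤ r_n · r_k for all n, k ∈ ℕ. Then there exist a nonempty bounded closed convex set K ⊆ B_X that is (r_n)-flat and a fixed-point-free affine map F : K → K such that ‖Fⁿ x − Fⁿ y‖ ≤ r_n (‖x − y‖ + 1) for all x, y ∈ K and all n ∈ ℕ. -/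
open Metric Set Filter Topology

/-!
Take a biorthogonal system `(vₖ, fₖ)` with `‖vₖ‖` comparable to `r (k + 1)`; one exists in every
infinite-dimensional normed space (Hahn–Banach plus a Gram–Schmidt correction). Let `K` be the
image of the simplex `{t ≥ 0, ∑ tₖ ≤ 1}` of `ℝ^ℕ` under `t ↦ ∑ tₖ vₖ`: it is compact since the
simplex is compact in the product topology and `vₖ → 0`, and truncating `t` shows it is flat.
The functionals `fₖ` recover `t`, so `F` can act on coefficients as the shift
`t ↦ (1 - ∑ t, t₀, t₁, …)`, which is affine. After `n` shifts the coefficients sum to `1` and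
vanish below index `n - 1`, so `Fⁿ K` has diameter at most `2 sup_{k ≥ n - 1} ‖vₖ‖ ≤ r n`.
A fixed point would have constant summable, hence zero, coefficients, while its first
coefficient is `1 - ∑ t = 1`.
-/

theorem exists_dual_biorthogonal {K V : Type*} [Field K] [AddCommGroup V] [Module K V]
    (h : ¬ FiniteDimensional K V) :
    ∃ (x : ℕ → V) (φ : ℕ → Module.Dual K V), ∀ j k, φ j (x k) = if j = k then 1 else 0 := by
  let b := Module.Basis.ofVectorSpace K V
  have : Infinite (Module.Basis.ofVectorSpaceIndex K V) :=
    not_finite_iff_infinite.1 fun _ => h (Module.Finite.of_basis b)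
  let ι := Infinite.natEmbedding (Module.Basis.ofVectorSpaceIndex K V)
  refine ⟨fun k => b (ι k), fun j => b.coord (ι j), fun j k => ?_⟩
  classical
  simp only [b.coord_apply, b.repr_self, Finsupp.single_apply, ι.injective.eq_iff, @eq_comm _ k j]

section Biorthogonal

variable {X : Type*} [NormedAddCommGroup X] [NormedSpace ℝ X]

theorem LinearMap.exists_strongDual_eqOn (φ : X →ₗ[ℝ] ℝ) (S : Submodule ℝ X)
    [FiniteDimensional ℝ S] : ∃ g : StrongDual ℝ X, EqOn g φ S := by
  obtain ⟨g, hg⟩ := StrongDual.exists_extension S (φ.comp S.subtype).toContinuousLinearMap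
  exact ⟨g, fun y hy => hg ⟨y, hy⟩⟩

theorem exists_strongDual_triangular (hinf : ¬ FiniteDimensional ℝ X) :
    ∃ (x : ℕ → X) (g : ℕ → StrongDual ℝ X),
      ∀ j k, k ≤ j → g j (x k) = if j = k then 1 else 0 := by
  classical
  obtain ⟨x, φ, hxφ⟩ := exists_dual_biorthogonal hinf
  choose g hg using fun j =>
    (φ j).exists_strongDual_eqOn (Submodule.span ℝ ((Finset.Iic j).image x : Set X))
  refine ⟨x, g, fun j k hkj => ?_⟩
  rw [hg j (Submodule.subset_span (by simpa using ⟨k, hkj, rfl⟩)), hxφ]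

def IsBiorthogonal (v : ℕ → X) (f : ℕ → StrongDual ℝ X) : Prop :=
  ∀ j k, f j (v k) = if j = k then 1 else 0

theorem IsBiorthogonal.linearIndependent {v : ℕ → X} {f : ℕ → StrongDual ℝ X}
    (h : IsBiorthogonal v f) : LinearIndependent ℝ v := by
  rw [linearIndependent_iff']
  intro s c hsum i hi
  simpa [h i, hi] using congrArg (f i) hsum

/-- Gram–Schmidt: subtract from `x k` its components along the earlier corrected vectors, so that
`g j` vanishes on it for `j < k`; triangularity keeps `g j` vanishing on it for `j > k`. -/
noncomputable def biorthogonalize (x : ℕ → X) (g : ℕ → StrongDual ℝ X) : ℕ → X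
  | k => x k - ∑ j : Fin k, g j (x k) • biorthogonalize x g j
decreasing_by exact j.isLt

theorem isBiorthogonal_biorthogonalize {x : ℕ → X} {g : ℕ → StrongDual ℝ X}
    (hxg : ∀ j k, k ≤ j → g j (x k) = if j = k then 1 else 0) :
    IsBiorthogonal (biorthogonalize x g) g := by
  intro i k
  induction k using Nat.strong_induction_on generalizing i with
  | _ k ih =>
  rw [biorthogonalize, map_sub, map_sum, Fin.sum_univ_eq_sum_range
    (fun j => g i (g j (x k) • biorthogonalize x g j))]
  simp only [map_smul, smul_eq_mul]
  have hsum : ∑ j ∈ Finset.range k, g j (x k) * g i (biorthogonalize x g j)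
      = if i < k then g i (x k) else 0 := by
    rw [Finset.sum_congr rfl fun j hj => by
      rw [ih j (Finset.mem_range.1 hj) i, mul_ite, mul_one, mul_zero]]
    simp [Finset.sum_ite_eq]
  rw [hsum]
  by_cases hik : i < k
  · rw [if_pos hik, if_neg hik.ne, sub_self]
  · rw [if_neg hik, hxg i k (not_lt.1 hik), sub_zero]

theorem IsBiorthogonal.smul {v : ℕ → X} {f : ℕ → StrongDual ℝ X} (h : IsBiorthogonal v f)
    {c : ℕ → ℝ} (hc : ∀ k, c k ≠ 0) :
    IsBiorthogonal (fun k => c k • v k) fun j => (c j)⁻¹ • f j := by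
  intro j k
  by_cases hjk : j = k
  · subst hjk; simp [h j j, hc j]
  · simp [h j k, hjk]

theorem exists_isBiorthogonal_norm_eq (hinf : ¬ FiniteDimensional ℝ X)
    (ρ : ℕ → ℝ) (hρ : ∀ k, 0 < ρ k) :
    ∃ (v : ℕ → X) (f : ℕ → StrongDual ℝ X), IsBiorthogonal v f ∧ ∀ k, ‖v k‖ = ρ k := by
  obtain ⟨x, g, hxg⟩ := exists_strongDual_triangular hinf
  obtain ⟨e, heg⟩ : ∃ e, IsBiorthogonal e g := ⟨_, isBiorthogonal_biorthogonalize hxg⟩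
  have hne : ∀ k, e k ≠ 0 := fun k h0 => by simpa [h0] using heg k k
  have hc : ∀ k, ρ k / ‖e k‖ ≠ 0 := fun k => div_ne_zero (hρ k).ne' (norm_ne_zero_iff.2 (hne k))
  refine ⟨_, _, heg.smul hc, fun k => ?_⟩
  rw [norm_smul, Real.norm_eq_abs, abs_div, abs_norm, abs_of_pos (hρ k),
    div_mul_cancel₀ _ (norm_ne_zero_iff.2 (hne k))]

theorem exists_isBiorthogonal_norm_le_half (hinf : ¬ FiniteDimensional ℝ X) {r : ℕ → ℝ}
    (hrpos : ∀ n, 1 ≤ n → 0 < r n) (hrdec : ∀ m n, 1 ≤ m → m ≤ n → r n ≤ r m)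
    (hrnull : Tendsto r atTop (𝓝 0)) :
    ∃ (v : ℕ → X) (f : ℕ → StrongDual ℝ X), IsBiorthogonal v f ∧
      Tendsto (fun k => ‖v k‖) atTop (𝓝 0) ∧ (∀ k, ‖v k‖ ≤ 1) ∧
      ∀ m k, 1 ≤ m → m ≤ k + 1 → ‖v k‖ ≤ r m / 2 := by
  have hr1 : 0 < r 1 := hrpos 1 le_rfl
  obtain ⟨v, f, hvf, hv⟩ := exists_isBiorthogonal_norm_eq hinf
    (fun k => r (k + 1) / (2 * (1 + r 1))) fun k => div_pos (hrpos _ (by omega)) (by positivity)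
  refine ⟨v, f, hvf, ?_, fun k => ?_, fun m k hm hmk => ?_⟩
  · simpa [hv] using (hrnull.comp (tendsto_add_atTop_nat 1)).div_const (2 * (1 + r 1))
  · rw [hv, div_le_one (by positivity)]
    linarith [hrdec 1 (k + 1) le_rfl (by omega)]
  · rw [hv, div_le_div_iff₀ (by positivity) two_pos]
    nlinarith [hrdec m (k + 1) hm hmk, hrpos (k + 1) (by omega)]

end Biorthogonal

section SubSimplex

def subSimplex : Set (ℕ → ℝ) := {t | (∀ k, 0 ≤ t k) ∧ ∀ s : Finset ℕ, ∑ k ∈ s, t k ≤ 1}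

variable {t : ℕ → ℝ}

theorem subSimplex_eq_iInter : subSimplex =
    (⋂ k, {t | 0 ≤ t k}) ∩ ⋂ s : Finset ℕ, {t | ∑ k ∈ s, t k ≤ 1} := by
  ext t; simp [subSimplex]

theorem summable_of_mem_subSimplex (ht : t ∈ subSimplex) : Summable t :=
  summable_of_sum_range_le ht.1 fun _ => ht.2 _

theorem tsum_le_one_of_mem_subSimplex (ht : t ∈ subSimplex) : ∑' k, t k ≤ 1 :=
  Real.tsum_le_of_sum_range_le ht.1 fun _ => ht.2 _

theorem zero_mem_subSimplex : (0 : ℕ → ℝ) ∈ subSimplex :=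
  ⟨fun _ => le_rfl, fun s => by simp⟩

theorem isCompact_subSimplex : IsCompact subSimplex := by
  refine (isCompact_univ_pi fun _ => isCompact_Icc (a := (0 : ℝ)) (b := 1)).of_isClosed_subset ?_
    fun t ht k _ => ⟨ht.1 k, by simpa using ht.2 {k}⟩
  rw [subSimplex_eq_iInter]
  exact (isClosed_iInter fun k => isClosed_le continuous_const (continuous_apply k)).inter
    (isClosed_iInter fun s => isClosed_le (continuous_finsetSum s fun k _ => continuous_apply k)
      continuous_const)

theorem convex_subSimplex : Convex ℝ subSimplex := by
  rw [subSimplex_eq_iInter]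
  exact (convex_iInter fun k => convex_halfSpace_ge (LinearMap.proj k).isLinear 0).inter
    (convex_iInter fun s => by
      simpa using convex_halfSpace_le (∑ k ∈ s, LinearMap.proj (R := ℝ) k).isLinear 1)

noncomputable def simplexShift (t : ℕ → ℝ) : ℕ → ℝ
  | 0 => 1 - ∑' j, t j
  | k + 1 => t k

@[simp] theorem simplexShift_zero : simplexShift t 0 = 1 - ∑' j, t j := rfl

@[simp] theorem simplexShift_succ (k : ℕ) : simplexShift t (k + 1) = t k := rfl

theorem tsum_simplexShift (ht : Summable t) : ∑' k, simplexShift t k = 1 := by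
  rw [((summable_nat_add_iff 1).1 ht).tsum_eq_zero_add]
  simp

theorem simplexShift_mem (ht : t ∈ subSimplex) : simplexShift t ∈ subSimplex := by
  have hnn : ∀ k, 0 ≤ simplexShift t k
    | 0 => sub_nonneg.2 (tsum_le_one_of_mem_subSimplex ht)
    | k + 1 => ht.1 k
  have hs : Summable (simplexShift t) := (summable_nat_add_iff 1).1 (summable_of_mem_subSimplex ht)
  exact ⟨hnn, fun s => (hs.sum_le_tsum s fun k _ => hnn k).trans (tsum_simplexShift
    (summable_of_mem_subSimplex ht)).le⟩

theorem mapsTo_simplexShift : MapsTo simplexShift subSimplex subSimplex :=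
  fun _ => simplexShift_mem

theorem simplexShift_lineMap {a b : ℕ → ℝ} (ha : Summable a) (hb : Summable b) (s : ℝ) :
    simplexShift ((1 - s) • a + s • b) = (1 - s) • simplexShift a + s • simplexShift b := by
  funext k
  cases k with
  | zero =>
    simp only [simplexShift_zero, Pi.add_apply, Pi.smul_apply, smul_eq_mul]
    rw [(ha.mul_left _).tsum_add (hb.mul_left _), tsum_mul_left, tsum_mul_left]
    ring
  | succ k => rfl

theorem simplexShift_iterate_eq_zero (ht : t ∈ subSimplex) {n k : ℕ} (hkn : k < n) :
    simplexShift^[n + 1] t k = 0 := by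
  induction n generalizing k with
  | zero => omega
  | succ n ih =>
    rw [Function.iterate_succ_apply']
    cases k with
    | zero =>
      rw [simplexShift_zero, Function.iterate_succ_apply', tsum_simplexShift, sub_self]
      exact summable_of_mem_subSimplex (mapsTo_simplexShift.iterate n ht)
    | succ k => exact ih (by omega)

theorem simplexShift_ne_self (ht : Summable t) : simplexShift t ≠ t := by
  intro h
  have hconst : ∀ k, t k = t 0 := fun k => by
    induction k with
    | zero => rfl
    | succ k ih => rw [← ih]; exact (congrFun h (k + 1)).symm
  have h0 : t 0 = 0 := by
    refine tendsto_nhds_unique ?_ ht.tendsto_atTop_zero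
    exact tendsto_const_nhds.congr fun k => (hconst k).symm
  have := congrFun h 0
  simp [hconst, h0] at this

end SubSimplex

section Synthesis

variable {X : Type*} [NormedAddCommGroup X] [NormedSpace ℝ X] {v : ℕ → X} {t : ℕ → ℝ} {M : ℝ}

noncomputable def synthesis (v : ℕ → X) (t : ℕ → ℝ) : X := ∑' k, t k • v k

theorem norm_synthesis_le (ht : Summable t) (hv : ∀ k, t k ≠ 0 → ‖v k‖ ≤ M) :
    ‖synthesis v t‖ ≤ (∑' k, |t k|) * M := by
  refine tsum_of_norm_bounded (ht.abs.hasSum.mul_right M) fun k => ?_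
  rcases eq_or_ne (t k) 0 with h | h
  · simp [h]
  · rw [norm_smul, Real.norm_eq_abs]
    exact mul_le_mul_of_nonneg_left (hv k h) (abs_nonneg _)

def infiniteSimplex (v : ℕ → X) : Set X := synthesis v '' subSimplex

theorem zero_mem_infiniteSimplex : (0 : X) ∈ infiniteSimplex v :=
  ⟨0, zero_mem_subSimplex, by simp [synthesis]⟩

theorem sum_smul_mem_infiniteSimplex (ht : t ∈ subSimplex) (N : ℕ) :
    ∑ k ∈ Finset.range N, t k • v k ∈ infiniteSimplex v := by
  refine ⟨fun k => if k < N then t k else 0, ⟨fun k => ?_, fun s => ?_⟩, ?_⟩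
  · dsimp only
    split_ifs
    exacts [ht.1 k, le_rfl]
  · refine (Finset.sum_le_sum fun k _ => ?_).trans (ht.2 s)
    split_ifs
    exacts [le_rfl, ht.1 k]
  · rw [synthesis, tsum_eq_sum (s := Finset.range N) fun k hk => by simp_all]
    exact Finset.sum_congr rfl fun k hk => by simp_all

variable [CompleteSpace X]

theorem summable_smul_of_norm_le (ht : Summable t) (hv : ∀ k, ‖v k‖ ≤ M) :
    Summable fun k => t k • v k :=
  .of_norm_bounded (ht.abs.mul_right M) fun k => by
    rw [norm_smul, Real.norm_eq_abs]
    exact mul_le_mul_of_nonneg_left (hv k) (abs_nonneg _)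

theorem synthesis_sub (hv : ∀ k, ‖v k‖ ≤ M) {a b : ℕ → ℝ} (ha : Summable a) (hb : Summable b) :
    synthesis v (a - b) = synthesis v a - synthesis v b := by
  simp only [synthesis, Pi.sub_apply, sub_smul]
  exact (summable_smul_of_norm_le ha hv).tsum_sub (summable_smul_of_norm_le hb hv)

theorem synthesis_lineMap (hv : ∀ k, ‖v k‖ ≤ M) {a b : ℕ → ℝ} (ha : Summable a)
    (hb : Summable b) (s : ℝ) :
    synthesis v ((1 - s) • a + s • b) = (1 - s) • synthesis v a + s • synthesis v b := by
  simp only [synthesis, Pi.add_apply, Pi.smul_apply, smul_eq_mul, add_smul, mul_smul]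
  rw [((summable_smul_of_norm_le ha hv).const_smul _).tsum_add
    ((summable_smul_of_norm_le hb hv).const_smul _), tsum_const_smul'', tsum_const_smul'']

theorem IsBiorthogonal.apply_synthesis {f : ℕ → StrongDual ℝ X} (hvf : IsBiorthogonal v f)
    (hv : ∀ k, ‖v k‖ ≤ M) (ht : Summable t) (j : ℕ) : f j (synthesis v t) = t j := by
  rw [synthesis, (f j).map_tsum (summable_smul_of_norm_le ht hv)]
  simp [hvf j]

theorem norm_synthesis_sub_sum_le (ht : t ∈ subSimplex) {N : ℕ} (hv : ∀ k, N ≤ k → ‖v k‖ ≤ M) :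
    ‖synthesis v t - ∑ k ∈ Finset.range N, t k • v k‖ ≤ M := by
  have hM : 0 ≤ M := (norm_nonneg _).trans (hv N le_rfl)
  have htail : Summable fun k => t (k + N) :=
    (summable_nat_add_iff N).2 (summable_of_mem_subSimplex ht)
  have hvtail : ∀ k, ‖v (k + N)‖ ≤ M := fun k => hv _ (by omega)
  have hs : Summable fun k => t k • v k :=
    (summable_nat_add_iff (f := fun k => t k • v k) N).1 (summable_smul_of_norm_le htail hvtail)
  rw [synthesis, ← hs.sum_add_tsum_nat_add N, add_sub_cancel_left]
  calc ‖∑' k, t (k + N) • v (k + N)‖ ≤ (∑' k, |t (k + N)|) * M :=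
        norm_synthesis_le htail fun k _ => hvtail k
    _ ≤ 1 * M := by
        gcongr
        simp only [abs_of_nonneg (ht.1 _)]
        exact (tsum_comp_le_tsum_of_inj (summable_of_mem_subSimplex ht) ht.1
          (add_left_injective N)).trans (tsum_le_one_of_mem_subSimplex ht)
    _ = M := one_mul M

theorem continuousOn_synthesis (hv : Tendsto (fun k => ‖v k‖) atTop (𝓝 0)) :
    ContinuousOn (synthesis v) subSimplex := by
  have hunif : TendstoUniformlyOn (fun N t => ∑ k ∈ Finset.range N, t k • v k) (synthesis v)
      atTop subSimplex := by
    rw [Metric.tendstoUniformlyOn_iff]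
    intro ε hε
    obtain ⟨N₀, hN₀⟩ := eventually_atTop.1 (hv.eventually (ge_mem_nhds (half_pos hε)))
    filter_upwards [eventually_ge_atTop N₀] with N hN t ht
    rw [dist_eq_norm]
    exact (norm_synthesis_sub_sum_le ht fun k hk => hN₀ k (hN.trans hk)).trans_lt
      (half_lt_self hε)
  refine hunif.continuousOn (Eventually.of_forall fun N => ?_).frequently
  exact (continuous_finsetSum _ fun k _ => (continuous_apply k).smul continuous_const).continuousOn

theorem IsBiorthogonal.synthesis_injective {f : ℕ → StrongDual ℝ X} (hvf : IsBiorthogonal v f)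
    (hv : ∀ k, ‖v k‖ ≤ M) {a b : ℕ → ℝ} (ha : Summable a) (hb : Summable b)
    (h : synthesis v a = synthesis v b) : a = b :=
  funext fun j => by rw [← hvf.apply_synthesis hv ha j, h, hvf.apply_synthesis hv hb j]

theorem isCompact_infiniteSimplex (hv : Tendsto (fun k => ‖v k‖) atTop (𝓝 0)) :
    IsCompact (infiniteSimplex v) :=
  isCompact_subSimplex.image_of_continuousOn (continuousOn_synthesis hv)

theorem convex_infiniteSimplex (hv : ∀ k, ‖v k‖ ≤ M) : Convex ℝ (infiniteSimplex v) := by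
  rintro _ ⟨a, ha, rfl⟩ _ ⟨b, hb, rfl⟩ α β hα hβ hαβ
  obtain rfl : α = 1 - β := by linarith
  exact ⟨_, convex_subSimplex ha hb hα hβ hαβ, synthesis_lineMap hv
    (summable_of_mem_subSimplex ha) (summable_of_mem_subSimplex hb) β⟩

theorem infiniteSimplex_subset_closedBall (hv : ∀ k, ‖v k‖ ≤ M) :
    infiniteSimplex v ⊆ closedBall 0 M := by
  rintro _ ⟨t, ht, rfl⟩
  simpa using norm_synthesis_sub_sum_le ht (N := 0) fun k _ => hv k

theorem infDist_inter_span_le {n : ℕ} (hv : ∀ k, n ≤ k → ‖v k‖ ≤ M) {x : X}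
    (hx : x ∈ infiniteSimplex v) :
    infDist x (infiniteSimplex v ∩ Submodule.span ℝ (range fun i : Fin n => v i)) ≤ M := by
  obtain ⟨t, ht, rfl⟩ := hx
  have hspan : ∑ k ∈ Finset.range n, t k • v k ∈ Submodule.span ℝ (range fun i : Fin n => v i) :=
    Submodule.sum_mem _ fun k hk => Submodule.smul_mem _ _
      (Submodule.subset_span ⟨⟨k, Finset.mem_range.1 hk⟩, rfl⟩)
  refine (infDist_le_dist_of_mem (mem_inter (sum_smul_mem_infiniteSimplex ht n) hspan)).trans ?_
  rw [dist_eq_norm]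
  exact norm_synthesis_sub_sum_le ht hv

noncomputable def shiftMap (v : ℕ → X) (f : ℕ → StrongDual ℝ X) (x : X) : X :=
  synthesis v (simplexShift fun j => f j x)

variable {f : ℕ → StrongDual ℝ X}

theorem IsBiorthogonal.shiftMap_synthesis (hvf : IsBiorthogonal v f) (hv : ∀ k, ‖v k‖ ≤ M)
    (ht : Summable t) : shiftMap v f (synthesis v t) = synthesis v (simplexShift t) := by
  rw [shiftMap, funext (hvf.apply_synthesis hv ht)]

theorem IsBiorthogonal.shiftMap_iterate_synthesis (hvf : IsBiorthogonal v f)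
    (hv : ∀ k, ‖v k‖ ≤ M) (ht : t ∈ subSimplex) (n : ℕ) :
    (shiftMap v f)^[n] (synthesis v t) = synthesis v (simplexShift^[n] t) := by
  induction n with
  | zero => rfl
  | succ n ih =>
    rw [Function.iterate_succ_apply', Function.iterate_succ_apply', ih,
      hvf.shiftMap_synthesis hv (summable_of_mem_subSimplex (mapsTo_simplexShift.iterate n ht))]

theorem IsBiorthogonal.mapsTo_shiftMap (hvf : IsBiorthogonal v f) (hv : ∀ k, ‖v k‖ ≤ M) :
    MapsTo (shiftMap v f) (infiniteSimplex v) (infiniteSimplex v) := by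
  rintro _ ⟨t, ht, rfl⟩
  rw [hvf.shiftMap_synthesis hv (summable_of_mem_subSimplex ht)]
  exact mem_image_of_mem _ (simplexShift_mem ht)

theorem IsBiorthogonal.shiftMap_ne_self (hvf : IsBiorthogonal v f) (hv : ∀ k, ‖v k‖ ≤ M)
    {x : X} (hx : x ∈ infiniteSimplex v) : shiftMap v f x ≠ x := by
  obtain ⟨t, ht, rfl⟩ := hx
  have hts := summable_of_mem_subSimplex ht
  rw [hvf.shiftMap_synthesis hv hts]
  exact fun h => simplexShift_ne_self hts
    (hvf.synthesis_injective hv (summable_of_mem_subSimplex (simplexShift_mem ht)) hts h)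

theorem IsBiorthogonal.shiftMap_lineMap (hvf : IsBiorthogonal v f) (hv : ∀ k, ‖v k‖ ≤ M)
    {y z : X} (hy : y ∈ infiniteSimplex v) (hz : z ∈ infiniteSimplex v) (s : ℝ) :
    shiftMap v f ((1 - s) • y + s • z) = (1 - s) • shiftMap v f y + s • shiftMap v f z := by
  obtain ⟨a, ha, rfl⟩ := hy
  obtain ⟨b, hb, rfl⟩ := hz
  have has := summable_of_mem_subSimplex ha
  have hbs := summable_of_mem_subSimplex hb
  have hab : Summable ((1 - s) • a + s • b) := (has.const_smul (1 - s)).add (hbs.const_smul s)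
  rw [← synthesis_lineMap hv has hbs, hvf.shiftMap_synthesis hv hab, simplexShift_lineMap has hbs,
    hvf.shiftMap_synthesis hv has, hvf.shiftMap_synthesis hv hbs]
  exact synthesis_lineMap hv (summable_of_mem_subSimplex (simplexShift_mem ha))
    (summable_of_mem_subSimplex (simplexShift_mem hb)) s

theorem IsBiorthogonal.norm_shiftMap_iterate_sub_le (hvf : IsBiorthogonal v f)
    (hv : ∀ k, ‖v k‖ ≤ M) {n : ℕ} {M' : ℝ} (hvn : ∀ k, n ≤ k → ‖v k‖ ≤ M') {y z : X}
    (hy : y ∈ infiniteSimplex v) (hz : z ∈ infiniteSimplex v) :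
    ‖(shiftMap v f)^[n + 1] y - (shiftMap v f)^[n + 1] z‖ ≤ 2 * M' := by
  obtain ⟨a, ha, rfl⟩ := hy
  obtain ⟨b, hb, rfl⟩ := hz
  have ha' := mapsTo_simplexShift.iterate (n + 1) ha
  have hb' := mapsTo_simplexShift.iterate (n + 1) hb
  set a' := simplexShift^[n + 1] a
  set b' := simplexShift^[n + 1] b
  have has := summable_of_mem_subSimplex ha'
  have hbs := summable_of_mem_subSimplex hb'
  rw [hvf.shiftMap_iterate_synthesis hv ha, hvf.shiftMap_iterate_synthesis hv hb,
    ← synthesis_sub hv has hbs]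
  have hsupp : ∀ k, (a' - b') k ≠ 0 → ‖v k‖ ≤ M' := fun k hk => hvn k <| by
    by_contra! hkn
    have ha0 : a' k = 0 := simplexShift_iterate_eq_zero ha hkn
    have hb0 : b' k = 0 := simplexShift_iterate_eq_zero hb hkn
    exact hk (by simp [ha0, hb0])
  have hM' : 0 ≤ M' := (norm_nonneg _).trans (hvn n le_rfl)
  have habs : ∀ k, |(a' - b') k| ≤ a' k + b' k := fun k =>
    abs_sub_le_iff.2 ⟨by linarith [hb'.1 k], by linarith [ha'.1 k]⟩
  calc ‖synthesis v (a' - b')‖ ≤ (∑' k, |(a' - b') k|) * M' :=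
        norm_synthesis_le (has.sub hbs) hsupp
    _ ≤ (∑' k, (a' k + b' k)) * M' :=
        mul_le_mul_of_nonneg_right ((has.sub hbs).abs.tsum_le_tsum habs (has.add hbs)) hM'
    _ ≤ 2 * M' := by
        rw [has.tsum_add hbs]
        nlinarith [tsum_le_one_of_mem_subSimplex ha', tsum_le_one_of_mem_subSimplex hb']

end Synthesis

theorem statement18_general {X : Type*} [NormedAddCommGroup X] [NormedSpace ℝ X] [CompleteSpace X]
    (hinf : ¬ FiniteDimensional ℝ X)
    (r : ℕ → ℝ) (hrpos : ∀ n : ℕ, 1 ≤ n → 0 < r n)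
    (hrdec : ∀ m n : ℕ, 1 ≤ m → m ≤ n → r n ≤ r m)
    (hrnull : Filter.Tendsto r Filter.atTop (nhds 0)) :
    ∃ (K : Set X) (F : X → X),
      K.Nonempty ∧ Bornology.IsBounded K ∧ IsClosed K ∧ Convex ℝ K ∧
      K ⊆ Metric.closedBall (0 : X) 1 ∧
      (∃ E : ℕ → Submodule ℝ X, ∀ n : ℕ, 1 ≤ n →
        Module.finrank ℝ (E n) = n ∧
        (K ∩ (E n : Set X)).Nonempty ∧ IsCompact (K ∩ (E n : Set X)) ∧
        ∀ x ∈ K, Metric.infDist x (K ∩ (E n : Set X)) ≤ r n) ∧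
      Set.MapsTo F K K ∧
      (∀ y ∈ K, F y ≠ y) ∧
      (∀ y ∈ K, ∀ z ∈ K, ∀ t : ℝ, t ∈ Set.Icc (0 : ℝ) 1 →
        F ((1 - t) • y + t • z) = (1 - t) • F y + t • F z) ∧
      (∀ n : ℕ, 1 ≤ n → ∀ y ∈ K, ∀ z ∈ K,
        ‖F^[n] y - F^[n] z‖ ≤ r n * (‖y - z‖ + 1)) := by
  obtain ⟨v, f, hvf, hv0, hv1, hv_le⟩ := exists_isBiorthogonal_norm_le_half hinf hrpos hrdec hrnull
  have hK := isCompact_infiniteSimplex hv0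
  refine ⟨infiniteSimplex v, shiftMap v f, ⟨0, zero_mem_infiniteSimplex⟩, hK.isBounded,
    hK.isClosed, convex_infiniteSimplex hv1, infiniteSimplex_subset_closedBall hv1,
    ⟨fun n => Submodule.span ℝ (range fun i : Fin n => v i), fun n hn => ⟨?_,
      ⟨0, zero_mem_infiniteSimplex, Submodule.zero_mem _⟩, ?_,
      fun x hx => infDist_inter_span_le (fun k hk => ?_) hx⟩⟩,
    hvf.mapsTo_shiftMap hv1, fun y hy => hvf.shiftMap_ne_self hv1 hy,
    fun y hy z hz s _ => hvf.shiftMap_lineMap hv1 hy hz s, fun n hn y hy z hz => ?_⟩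
  · exact (finrank_span_eq_card (b := fun i : Fin n => v i)
      (hvf.linearIndependent.comp _ Fin.val_injective)).trans (Fintype.card_fin n)
  · have := FiniteDimensional.span_of_finite ℝ (finite_range fun i : Fin n => v i)
    exact hK.inter_right (Submodule.closed_of_finiteDimensional _)
  · exact (hv_le n k hn (by omega)).trans (half_le_self (hrpos n hn).le)
  · obtain ⟨m, rfl⟩ := Nat.exists_eq_add_of_le' hn
    calc ‖(shiftMap v f)^[m + 1] y - (shiftMap v f)^[m + 1] z‖ ≤ 2 * (r (m + 1) / 2) :=
          hvf.norm_shiftMap_iterate_sub_le hv1 (fun k hk => hv_le _ k hn (by omega)) hy hz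
      _ ≤ r (m + 1) * (‖y - z‖ + 1) := by nlinarith [norm_nonneg (y - z), hrpos (m + 1) hn]

/-- Let `X` be an infinite-dimensional real Banach space and `(rₙ)` a
decreasing null sequence of positive reals with `r_{n+k} ≤ rₙ · r_k`.  Then there exist a
nonempty bounded closed convex `(rₙ)`-flat set `K ⊆ B_X` and a fixed-point-free affine map
`F : K → K` with `‖Fⁿ x − Fⁿ y‖ ≤ rₙ (‖x − y‖ + 1)` for all `x, y ∈ K` and `n`. -/
theorem statement18 {X : Type*} [NormedAddCommGroup X] [NormedSpace ℝ X] [CompleteSpace X]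
    (hinf : ¬ FiniteDimensional ℝ X)
    (r : ℕ → ℝ) (hrpos : ∀ n : ℕ, 1 ≤ n → 0 < r n)
    (hrdec : ∀ m n : ℕ, 1 ≤ m → m ≤ n → r n ≤ r m)
    (hrnull : Filter.Tendsto r Filter.atTop (nhds 0))
    (hrsub : ∀ n k : ℕ, 1 ≤ n → 1 ≤ k → r (n + k) ≤ r n * r k) :
    ∃ (K : Set X) (F : X → X),
      K.Nonempty ∧ Bornology.IsBounded K ∧ IsClosed K ∧ Convex ℝ K ∧
      K ⊆ Metric.closedBall (0 : X) 1 ∧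
      (∃ E : ℕ → Submodule ℝ X, ∀ n : ℕ, 1 ≤ n →
        Module.finrank ℝ (E n) = n ∧
        (K ∩ (E n : Set X)).Nonempty ∧ IsCompact (K ∩ (E n : Set X)) ∧
        ∀ x ∈ K, Metric.infDist x (K ∩ (E n : Set X)) ≤ r n) ∧
      Set.MapsTo F K K ∧
      (∀ y ∈ K, F y ≠ y) ∧
      (∀ y ∈ K, ∀ z ∈ K, ∀ t : ℝ, t ∈ Set.Icc (0 : ℝ) 1 →
        F ((1 - t) • y + t • z) = (1 - t) • F y + t • F z) ∧
      (∀ n : ℕ, 1 ≤ n → ∀ y ∈ K, ∀ z ∈ K,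
        ‖F^[n] y - F^[n] z‖ ≤ r n * (‖y - z‖ + 1)) :=
  statement18_general hinf r hrpos hrdec hrnull
end
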